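/- Distance bound from the Reg-one(t) set to the complementarity set: equip ℝ^q × ℝ^q with the Euclidean norm. If t ≥ 0 and (x1, x2) ∈ R1(t), then the distance from (x1, x2) to the complementarity set C (the infimum of Euclidean distances to points of C) is at most √t. -/

import Mathlib

/-!
Zeroing the smaller coordinate of each complementary pair `(x₁ⱼ, x₂ⱼ)` lands in the
complementarity set and moves the point by `min(x₁ⱼ, x₂ⱼ)` in that pair. Since
`min(a, b)² ≤ a b` for `a, b ≥ 0`, the squared distance moved is at most `x₁ᵀx₂ ≤ t`.
-/

open Sum

theorem min_sq_le_mul {a b : ℝ} (ha : 0 ≤ a) (hb : 0 ≤ b) : min a b ^ 2 ≤ a * b :=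
  (sq (min a b)).trans_le <| mul_le_mul (min_le_left a b) (min_le_right a b) (le_min ha hb) ha

namespace Complementarity

variable {ι : Type*}

def complementaritySet (ι : Type*) : Set (EuclideanSpace ℝ (ι ⊕ ι)) :=
  {y | ∀ j, 0 ≤ y (inl j) ∧ 0 ≤ y (inr j) ∧ y (inl j) * y (inr j) = 0}

noncomputable def zeroSmallerCoord (x : EuclideanSpace ℝ (ι ⊕ ι)) :
    EuclideanSpace ℝ (ι ⊕ ι) :=
  WithLp.toLp 2 <| Sum.elim
    (fun j => if x (inl j) ≤ x (inr j) then 0 else x (inl j))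
    (fun j => if x (inl j) ≤ x (inr j) then x (inr j) else 0)

theorem zeroSmallerCoord_mem {x : EuclideanSpace ℝ (ι ⊕ ι)}
    (h1 : ∀ j, 0 ≤ x (inl j)) (h2 : ∀ j, 0 ≤ x (inr j)) :
    zeroSmallerCoord x ∈ complementaritySet ι := by
  intro j
  simp only [zeroSmallerCoord, PiLp.toLp_apply, Sum.elim_inl, Sum.elim_inr]
  split_ifs <;> simp [h1 j, h2 j]

theorem sq_dist_pair_zeroSmallerCoord_le {x : EuclideanSpace ℝ (ι ⊕ ι)} (j : ι)
    (h1 : 0 ≤ x (inl j)) (h2 : 0 ≤ x (inr j)) :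
    dist (x (inl j)) (zeroSmallerCoord x (inl j)) ^ 2 +
        dist (x (inr j)) (zeroSmallerCoord x (inr j)) ^ 2 ≤
      x (inl j) * x (inr j) := by
  simp only [zeroSmallerCoord, PiLp.toLp_apply, Sum.elim_inl, Sum.elim_inr, Real.dist_eq, sq_abs]
  by_cases h : x (inl j) ≤ x (inr j)
  · simpa [h, min_eq_left h] using min_sq_le_mul h1 h2
  · simpa [h, min_eq_right (le_of_not_ge h)] using min_sq_le_mul h1 h2

theorem sq_dist_zeroSmallerCoord_le [Fintype ι] {x : EuclideanSpace ℝ (ι ⊕ ι)}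
    (h1 : ∀ j, 0 ≤ x (inl j)) (h2 : ∀ j, 0 ≤ x (inr j)) :
    dist x (zeroSmallerCoord x) ^ 2 ≤ ∑ j, x (inl j) * x (inr j) := by
  rw [EuclideanSpace.dist_eq, Real.sq_sqrt (by positivity), Fintype.sum_sum_type,
    ← Finset.sum_add_distrib]
  exact Finset.sum_le_sum fun j _ => sq_dist_pair_zeroSmallerCoord_le j (h1 j) (h2 j)

theorem infDist_complementaritySet_le_sqrt [Fintype ι] {t : ℝ} {x : EuclideanSpace ℝ (ι ⊕ ι)}
    (h1 : ∀ j, 0 ≤ x (inl j)) (h2 : ∀ j, 0 ≤ x (inr j))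
    (hsum : ∑ j, x (inl j) * x (inr j) ≤ t) :
    Metric.infDist x (complementaritySet ι) ≤ Real.sqrt t :=
  calc Metric.infDist x (complementaritySet ι)
      ≤ dist x (zeroSmallerCoord x) := Metric.infDist_le_dist_of_mem (zeroSmallerCoord_mem h1 h2)
    _ = Real.sqrt (dist x (zeroSmallerCoord x) ^ 2) := (Real.sqrt_sq dist_nonneg).symm
    _ ≤ Real.sqrt t := Real.sqrt_le_sqrt ((sq_dist_zeroSmallerCoord_le h1 h2).trans hsum)

end Complementarity

theorem stmt_10_general (q : ℕ) (t : ℝ)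
    (x : EuclideanSpace ℝ (Fin q ⊕ Fin q))
    (h1 : ∀ j, 0 ≤ x (Sum.inl j)) (h2 : ∀ j, 0 ≤ x (Sum.inr j))
    (hsum : (∑ j, x (Sum.inl j) * x (Sum.inr j)) ≤ t) :
    Metric.infDist x
      {y : EuclideanSpace ℝ (Fin q ⊕ Fin q) |
        ∀ j, 0 ≤ y (Sum.inl j) ∧ 0 ≤ y (Sum.inr j) ∧
          y (Sum.inl j) * y (Sum.inr j) = 0}
      ≤ Real.sqrt t :=
  Complementarity.infDist_complementaritySet_le_sqrt h1 h2 hsum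

/-- Distance bound from the Reg-one(t) set to the complementarity set, in the
Euclidean norm on ℝ^q × ℝ^q ≅ ℝ^{2q}: points of R1(t) are within √t of C. -/
theorem stmt_10 (q : ℕ) (hq : 0 < q) (t : ℝ) (ht : 0 ≤ t)
    (x : EuclideanSpace ℝ (Fin q ⊕ Fin q))
    (h1 : ∀ j, 0 ≤ x (Sum.inl j)) (h2 : ∀ j, 0 ≤ x (Sum.inr j))
    (hsum : (∑ j, x (Sum.inl j) * x (Sum.inr j)) ≤ t) :
    Metric.infDist x
      {y : EuclideanSpace ℝ (Fin q ⊕ Fin q) |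
        ∀ j, 0 ≤ y (Sum.inl j) ∧ 0 ≤ y (Sum.inr j) ∧
          y (Sum.inl j) * y (Sum.inr j) = 0}
      ≤ Real.sqrt t :=
  stmt_10_general q t x h1 h2 hsum
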